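/- arXiv:2412.07484 — 2 statements merged into one kernel-verified Lean document; each statement's English description precedes it below -/
import Mathlib

section
/- Let α be irrational and A : 𝕋 → SU(2) continuous, and let F : 𝕋 × SU(2) → 𝕋 × SU(2) be the skew-product F(x,S) = (x+α, A(x)·S). If F is topologically transitive (has a dense forward orbit), then F is minimal (every orbit is dense). -/
open Matrix Filter

noncomputable section

abbrev 𝕋 : Type := AddCircle (1 : ℝ)
abbrev SU2 := Matrix.specialUnitaryGroup (Fin 2) ℂ

/-! ### Auxiliary facts about `SU(2)` -/

lemma su2_val_mem_unitary (g : ↥SU2) : (g : Matrix (Fin 2) (Fin 2) ℂ) ∈ unitaryGroup (Fin 2) ℂ :=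
  (Matrix.mem_specialUnitaryGroup_iff.mp g.2).1

lemma su2_val_det (g : ↥SU2) : (g : Matrix (Fin 2) (Fin 2) ℂ).det = 1 :=
  (Matrix.mem_specialUnitaryGroup_iff.mp g.2).2

/-- The inverse of an element of `SU(2)`, given by the conjugate transpose. -/
def su2Inv (g : ↥SU2) : ↥SU2 :=
  ⟨star (g : Matrix (Fin 2) (Fin 2) ℂ), by
    refine Matrix.mem_specialUnitaryGroup_iff.mpr ⟨Unitary.star_mem (su2_val_mem_unitary g), ?_⟩
    rw [Matrix.star_eq_conjTranspose, Matrix.det_conjTranspose, su2_val_det]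
    simp⟩

lemma su2_mul_inv (g : ↥SU2) : g * su2Inv g = 1 := by
  apply Subtype.ext
  exact (Unitary.mem_iff.mp (su2_val_mem_unitary g)).2

lemma su2_inv_mul (g : ↥SU2) : su2Inv g * g = 1 := by
  apply Subtype.ext
  exact (Unitary.mem_iff.mp (su2_val_mem_unitary g)).1

/-- `SU(2)` is a compact subset of the space of matrices. -/
lemma su2_isCompact : IsCompact ((SU2 : Submonoid (Matrix (Fin 2) (Fin 2) ℂ)) :
    Set (Matrix (Fin 2) (Fin 2) ℂ)) := by
  have hK : IsCompact (Set.univ.pi fun _ : Fin 2 => Set.univ.pi fun _ : Fin 2 =>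
      Metric.closedBall (0 : ℂ) 1 : Set (Matrix (Fin 2) (Fin 2) ℂ)) :=
    isCompact_univ_pi fun _ => isCompact_univ_pi fun _ => isCompact_closedBall _ _
  refine hK.of_isClosed_subset ?_ ?_
  · have h1 : IsClosed {M : Matrix (Fin 2) (Fin 2) ℂ | M * star M = 1} :=
      isClosed_eq (continuous_id.matrix_mul continuous_id.matrix_conjTranspose) continuous_const
    have h2 : IsClosed {M : Matrix (Fin 2) (Fin 2) ℂ | star M * M = 1} :=
      isClosed_eq (continuous_id.matrix_conjTranspose.matrix_mul continuous_id) continuous_const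
    have h3 : IsClosed {M : Matrix (Fin 2) (Fin 2) ℂ | M.det = 1} :=
      isClosed_eq continuous_id.matrix_det continuous_const
    have hset : ((SU2 : Submonoid (Matrix (Fin 2) (Fin 2) ℂ)) : Set (Matrix (Fin 2) (Fin 2) ℂ)) =
        ({M : Matrix (Fin 2) (Fin 2) ℂ | star M * M = 1} ∩
          {M : Matrix (Fin 2) (Fin 2) ℂ | M * star M = 1}) ∩
          {M : Matrix (Fin 2) (Fin 2) ℂ | M.det = 1} := by
      ext M
      constructor
      · intro hMem
        obtain ⟨hu, hd⟩ := Matrix.mem_specialUnitaryGroup_iff.mp hMem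
        exact ⟨⟨(Unitary.mem_iff.mp hu).1, (Unitary.mem_iff.mp hu).2⟩, hd⟩
      · rintro ⟨⟨hu1, hu2⟩, hd⟩
        exact Matrix.mem_specialUnitaryGroup_iff.mpr ⟨Unitary.mem_iff.mpr ⟨hu1, hu2⟩, hd⟩
    rw [hset]
    exact (h2.inter h1).inter h3
  · intro M hM
    have hu := (Unitary.mem_iff.mp (Matrix.mem_specialUnitaryGroup_iff.mp hM).1).2
    rw [Set.mem_univ_pi]
    intro i
    rw [Set.mem_univ_pi]
    intro j
    rw [Metric.mem_closedBall, dist_zero_right]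
    have hdiag := congrFun (congrFun hu i) i
    erw [Matrix.mul_apply, Matrix.one_apply_eq] at hdiag
    have hsum : (∑ k : Fin 2, (Complex.normSq (M i k) : ℂ)) = 1 := by
      rw [← hdiag]
      refine Finset.sum_congr rfl fun k _ => ?_
      erw [Matrix.star_eq_conjTranspose, Matrix.conjTranspose_apply]
      exact (Complex.mul_conj (M i k)).symm
    have hsum' : (∑ k : Fin 2, Complex.normSq (M i k)) = 1 := by
      have h := hsum
      push_cast at h
      exact_mod_cast h
    have hle : Complex.normSq (M i j) ≤ 1 := by
      rw [← hsum']
      exact Finset.single_le_sum (fun k _ => Complex.normSq_nonneg (M i k)) (Finset.mem_univ j)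
    have h1 : ‖M i j‖ ^ 2 ≤ 1 := by
      rw [Complex.sq_norm]
      exact hle
    nlinarith [norm_nonneg (M i j)]

/-! ### Density of orbits of the irrational rotation on the base circle -/

lemma dense_zsmul (α : ℝ) (hα : Irrational α) :
    Dense (Set.range fun k : ℤ => k • (α : 𝕋)) := by
  set S : AddSubgroup ℝ := AddSubgroup.closure {α, 1} with hSdef
  have hαS : α ∈ S := AddSubgroup.subset_closure (by simp)
  have h1S : (1 : ℝ) ∈ S := AddSubgroup.subset_closure (by simp)
  have hS : Dense (S : Set ℝ) := by
    rcases AddSubgroup.dense_or_cyclic S with h | ⟨b, hb⟩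
    · exact h
    · exfalso
      rw [hb] at hαS h1S
      obtain ⟨m, hm⟩ := AddSubgroup.mem_closure_singleton.mp hαS
      obtain ⟨n, hn⟩ := AddSubgroup.mem_closure_singleton.mp h1S
      rw [zsmul_eq_mul] at hm hn
      have hn0 : (n : ℝ) ≠ 0 := by
        intro h
        rw [h, zero_mul] at hn
        exact one_ne_zero hn.symm
      have key : (n : ℝ) * α = m := by
        rw [← hm]
        calc (n : ℝ) * ((m : ℝ) * b) = (m : ℝ) * ((n : ℝ) * b) := by ring
          _ = m := by rw [hn, mul_one]
      refine hα ⟨(m : ℚ) / (n : ℚ), ?_⟩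
      push_cast
      rw [div_eq_iff hn0]
      linarith [key]
  have hsurj : Function.Surjective ((↑) : ℝ → 𝕋) := QuotientAddGroup.mk_surjective
  have hcont : Continuous ((↑) : ℝ → 𝕋) := AddCircle.continuous_mk' 1
  have himg : Dense (((↑) : ℝ → 𝕋) '' S) := hsurj.denseRange.dense_image hcont hS
  refine himg.mono ?_
  rintro _ ⟨s, hs, rfl⟩
  refine AddSubgroup.closure_induction
    (p := fun s _ => ((s : ℝ) : 𝕋) ∈ Set.range fun k : ℤ => k • (α : 𝕋)) ?_ ?_ ?_ ?_ hs
  · intro y hy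
    rcases hy with h | h
    · exact ⟨1, by show (1 : ℤ) • (α : 𝕋) = _; rw [one_zsmul, h]⟩
    · refine ⟨0, ?_⟩
      show (0 : ℤ) • (α : 𝕋) = _
      rw [zero_zsmul]
      rw [Set.mem_singleton_iff.mp h]
      exact (AddCircle.coe_period 1).symm
  · exact ⟨0, by show (0 : ℤ) • (α : 𝕋) = _; rw [zero_zsmul]; rfl⟩
  · rintro x y _ _ ⟨k, hk⟩ ⟨l, hl⟩
    refine ⟨k + l, ?_⟩
    show (k + l) • (α : 𝕋) = _
    rw [add_zsmul]
    rw [show (k • (α : 𝕋)) = ↑x from hk, show (l • (α : 𝕋)) = ↑y from hl]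
    rfl
  · rintro x _ ⟨k, hk⟩
    refine ⟨-k, ?_⟩
    show (-k) • (α : 𝕋) = _
    rw [neg_zsmul, show (k • (α : 𝕋)) = ↑x from hk]
    rfl

lemma dense_nsmul (α : ℝ) (hα : Irrational α) :
    Dense (Set.range fun n : ℕ => n • (α : 𝕋)) := by
  haveI : Fact ((0 : ℝ) < 1) := ⟨one_pos⟩
  set a : 𝕋 := (α : 𝕋) with ha
  have hneg : -a ∈ closure (Set.range fun n : ℕ => n • a) := by
    rw [Metric.mem_closure_iff]
    intro ε hε
    obtain ⟨n, hn⟩ := exists_nat_one_div_lt hε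
    obtain ⟨j, hj, hjle⟩ := AddCircle.exists_norm_nsmul_le a (Nat.succ_pos n)
    have hj1 : 1 ≤ j := hj.1
    have hlt : ‖j • a‖ < ε := by
      calc ‖j • a‖ ≤ 1 / (↑(n.succ + 1) : ℝ) := hjle
        _ ≤ 1 / ((n : ℝ) + 1) := by
            apply one_div_le_one_div_of_le (by positivity)
            push_cast
            linarith
        _ < ε := hn
    refine ⟨(j - 1) • a, ⟨j - 1, rfl⟩, ?_⟩
    have hsucc : (j - 1) • a + a = j • a := by
      rw [← succ_nsmul]
      congr 1
      omega
    rw [dist_eq_norm]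
    have hre : -a - (j - 1) • a = -(j • a) := by
      rw [← hsucc]; abel
    rw [hre, norm_neg]
    exact hlt
  set C : AddSubmonoid 𝕋 := (AddSubmonoid.closure {a}).topologicalClosure with hC
  have hrange : ((AddSubmonoid.closure {a} : AddSubmonoid 𝕋) : Set 𝕋) =
      Set.range fun n : ℕ => n • a := by
    ext y
    simp only [SetLike.mem_coe, AddSubmonoid.mem_closure_singleton, Set.mem_range]
  have hCset : (C : Set 𝕋) = closure (Set.range fun n : ℕ => n • a) := by
    rw [hC]
    show closure ((AddSubmonoid.closure {a} : AddSubmonoid 𝕋) : Set 𝕋) = _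
    rw [hrange]
  have hnegC : -a ∈ C := by
    show -a ∈ (C : Set 𝕋)
    rw [hCset]
    exact hneg
  have hz : ∀ k : ℤ, k • a ∈ C := by
    intro k
    rcases le_or_gt 0 k with h | h
    · lift k to ℕ using h
      rw [natCast_zsmul]
      exact AddSubmonoid.le_topologicalClosure _
        (AddSubmonoid.mem_closure_singleton.mpr ⟨k, rfl⟩)
    · obtain ⟨m, hm⟩ : ∃ m : ℕ, k = -(m : ℤ) := ⟨k.natAbs, by omega⟩
      rw [hm]
      have hsm : (-(m : ℤ)) • a = m • (-a) := by simp
      rw [hsm]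
      exact AddSubmonoid.nsmul_mem _ hnegC m
  have hdenseC : Dense (C : Set 𝕋) := by
    refine (dense_zsmul α hα).mono ?_
    rintro _ ⟨k, rfl⟩
    exact hz k
  rw [hCset] at hdenseC
  exact dense_closure.mp hdenseC

lemma dense_base (α : ℝ) (hα : Irrational α) (x : 𝕋) :
    Dense (Set.range fun n : ℕ => x + n • (α : 𝕋)) := by
  have h : (fun n : ℕ => x + n • (α : 𝕋)) =
      (fun y : 𝕋 => x + y) ∘ fun n : ℕ => n • (α : 𝕋) := rfl
  rw [h]
  have hsurj : DenseRange (fun y : 𝕋 => x + y) := (Homeomorph.addLeft x).surjective.denseRange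
  have hcont : Continuous (fun y : 𝕋 => x + y) := continuous_const.add continuous_id
  exact DenseRange.comp hsurj (dense_nsmul α hα) hcont

/-- Right multiplication in the fiber, as a homeomorphism of `𝕋 × SU2`. -/
def fiberMul (g : ↥SU2) : (𝕋 × ↥SU2) ≃ₜ (𝕋 × ↥SU2) where
  toFun p := (p.1, p.2 * g)
  invFun p := (p.1, p.2 * su2Inv g)
  left_inv p := by
    refine Prod.ext rfl ?_
    show p.2 * g * su2Inv g = p.2
    rw [mul_assoc, su2_mul_inv, mul_one]
  right_inv p := by
    refine Prod.ext rfl ?_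
    show p.2 * su2Inv g * g = p.2
    rw [mul_assoc, su2_inv_mul, mul_one]
  continuous_toFun := continuous_fst.prodMk (continuous_snd.mul continuous_const)
  continuous_invFun := continuous_fst.prodMk (continuous_snd.mul continuous_const)

lemma fiberMul_apply (g : ↥SU2) (p : 𝕋 × ↥SU2) : (fiberMul g) p = (p.1, p.2 * g) := rfl

/-- A topologically transitive skew-product `F(x,S) = (x+α, A(x)·S)` on `𝕋 × SU(2)`
over an irrational rotation is minimal: every forward orbit is dense. -/
theorem stmt1 (α : ℝ) (hα : Irrational α) (A : 𝕋 → ↥SU2) (hA : Continuous A)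
    (F : 𝕋 × ↥SU2 → 𝕋 × ↥SU2)
    (hF : ∀ p : 𝕋 × ↥SU2, F p = (p.1 + (α : 𝕋), A p.1 * p.2))
    (htrans : ∃ p : 𝕋 × ↥SU2, Dense (Set.range fun n : ℕ => F^[n] p)) :
    ∀ p : 𝕋 × ↥SU2, Dense (Set.range fun n : ℕ => F^[n] p) := by
  haveI hSU : CompactSpace ↥SU2 := isCompact_iff_compactSpace.mp su2_isCompact
  have hFc : Continuous F := by
    have hFeq : F = fun p : 𝕋 × ↥SU2 => (p.1 + (α : 𝕋), A p.1 * p.2) := funext hF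
    rw [hFeq]
    exact (continuous_fst.add continuous_const).prodMk
      ((hA.comp continuous_fst).mul continuous_snd)
  have hsemi : ∀ g : ↥SU2, Function.Semiconj (⇑(fiberMul g)) F F := by
    intro g p
    rw [hF p, fiberMul_apply, fiberMul_apply, hF (p.1, p.2 * g)]
    exact Prod.ext rfl (mul_assoc _ _ _)
  obtain ⟨q, hq⟩ := htrans
  intro p
  set C : Set (𝕋 × ↥SU2) := closure (Set.range fun n : ℕ => F^[n] p) with hCdef
  have hCclosed : IsClosed C := isClosed_closure
  have himgsub : F '' C ⊆ C := by
    calc F '' C ⊆ closure (F '' (Set.range fun n : ℕ => F^[n] p)) :=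
          image_closure_subset_closure_image hFc
      _ ⊆ C := by
          apply closure_mono
          rintro _ ⟨_, ⟨n, rfl⟩, rfl⟩
          exact ⟨n + 1, Function.iterate_succ_apply' F n p⟩
  have hCinv : ∀ z ∈ C, F z ∈ C := fun z hz => himgsub (Set.mem_image_of_mem F hz)
  have hbase : ∀ n : ℕ, (F^[n] p).1 = p.1 + n • (α : 𝕋) := by
    intro n
    induction n with
    | zero => simp
    | succ n ih =>
      rw [Function.iterate_succ_apply', hF]
      show (F^[n] p).1 + (α : 𝕋) = p.1 + (n + 1) • (α : 𝕋)
      rw [ih, succ_nsmul, add_assoc]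
  have hCcompact : IsCompact C := hCclosed.isCompact
  have hfst : Prod.fst '' C = Set.univ := by
    have hclosed : IsClosed (Prod.fst '' C) := (hCcompact.image continuous_fst).isClosed
    have hdense : Dense (Prod.fst '' C) := by
      refine (dense_base α hα p.1).mono ?_
      rintro _ ⟨n, rfl⟩
      exact ⟨F^[n] p, subset_closure ⟨n, rfl⟩, hbase n⟩
    rw [← hclosed.closure_eq]
    exact hdense.closure_eq
  obtain ⟨z, hzC, hz1⟩ : ∃ z ∈ C, z.1 = q.1 := by
    have hmem : q.1 ∈ Prod.fst '' C := hfst ▸ Set.mem_univ _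
    obtain ⟨z, hz, hz1⟩ := hmem
    exact ⟨z, hz, hz1⟩
  set g : ↥SU2 := su2Inv q.2 * z.2 with hg
  have hzq : (fiberMul g) q = z := by
    rw [fiberMul_apply]
    refine Prod.ext hz1.symm ?_
    show q.2 * (su2Inv q.2 * z.2) = z.2
    rw [← mul_assoc, su2_mul_inv, one_mul]
  have hzdense : Dense (Set.range fun n : ℕ => F^[n] z) := by
    have hiter : ∀ n : ℕ, F^[n] z = (fiberMul g) (F^[n] q) := by
      intro n
      rw [← hzq]
      exact ((hsemi g).iterate_right n q).symm
    have hrangeq : (Set.range fun n : ℕ => F^[n] z) =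
        (fiberMul g) '' Set.range fun n : ℕ => F^[n] q := by
      ext w
      constructor
      · rintro ⟨n, rfl⟩; exact ⟨F^[n] q, ⟨n, rfl⟩, (hiter n).symm⟩
      · rintro ⟨_, ⟨n, rfl⟩, rfl⟩; exact ⟨n, hiter n⟩
    rw [hrangeq]
    exact (fiberMul g).surjective.denseRange.dense_image (fiberMul g).continuous hq
  have horb : ∀ n : ℕ, F^[n] z ∈ C := by
    intro n
    induction n with
    | zero => simpa using hzC
    | succ n ih =>
      rw [Function.iterate_succ_apply']
      exact hCinv _ ih
  have hCdense : Dense C := hzdense.mono (Set.range_subset_iff.mpr horb)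
  exact dense_closure.mp hCdense
end
end

section
/- Let α satisfy ‖qα‖ ≥ γ q^{-τ} for all integers q ≥ 1 (Diophantine), and let (kᵢ) be a strictly increasing sequence of positive integers and β ∈ ℝ with ‖β - kᵢα‖ ≤ kᵢ^{-(τ+2)} for all i. Then β is irrational. -/
open Filter

/-- Distance of a real number to the nearest integer. -/
noncomputable def distInt (x : ℝ) : ℝ := |x - round x|

lemma distInt_le_int (x : ℝ) (n : ℤ) : distInt x ≤ |x - n| := round_le x n

/-- If `α` is Diophantine (`‖qα‖ ≥ γq^{-τ}` for all `q ≥ 1`) and `‖β - kᵢα‖ ≤ kᵢ^{-(τ+2)}`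
along a strictly increasing sequence of positive integers `kᵢ`, then `β` is irrational. -/
theorem stmt19 (α γ τ : ℝ) (hγ : 0 < γ) (hτ : 1 ≤ τ)
    (hdio : ∀ q : ℕ, 0 < q → γ * (q : ℝ) ^ (-τ) ≤ distInt ((q : ℝ) * α))
    (k : ℕ → ℕ) (hk : StrictMono k) (hkpos : ∀ i, 0 < k i) (β : ℝ)
    (happ : ∀ i, distInt (β - (k i : ℝ) * α) ≤ (k i : ℝ) ^ (-(τ + 2))) :
    Irrational β := by
  by_contra hβ
  obtain ⟨r, hr⟩ := not_not.mp hβ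
  set q : ℕ := r.den with hq
  have hq0 : 0 < q := r.pos
  set Q : ℝ := (q : ℝ) with hQ
  have hQ1 : (1:ℝ) ≤ Q := by rw [hQ]; exact_mod_cast hq0
  have hQ0 : (0:ℝ) < Q := by linarith
  -- qβ is the integer r.num
  have hqβ : Q * β = (r.num : ℝ) := by
    rw [← hr, Rat.cast_def]
    field_simp
    rw [hQ, hq]; ring
  -- the set-up: c = γ * Q^{-τ}
  set c : ℝ := γ * Q ^ (-τ) with hc
  have hc0 : 0 < c := mul_pos hγ (Real.rpow_pos_of_pos hQ0 _)
  obtain ⟨N, hN⟩ := exists_nat_gt (Q / c)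
  set K : ℝ := (k N : ℝ) with hK
  have hK1 : (1:ℝ) ≤ K := by rw [hK]; exact_mod_cast hkpos N
  have hK0 : (0:ℝ) < K := by linarith
  have hKN : (N : ℝ) ≤ K := by rw [hK]; exact_mod_cast hk.le_apply
  have hKgt : Q / c < K := lt_of_lt_of_le hN hKN
  -- from happ: |β - kα - m| ≤ ε
  set m : ℤ := round (β - K * α) with hm
  have hd : |β - K * α - m| ≤ K ^ (-(τ + 2)) := happ N
  -- distInt of (q * k N) * α
  have hnk : ((q * k N : ℕ) : ℝ) = Q * K := by push_cast; ring
  have key : distInt (((q * k N : ℕ) : ℝ) * α) ≤ Q * K ^ (-(τ + 2)) := by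
    calc distInt (((q * k N : ℕ) : ℝ) * α) ≤ |((q * k N : ℕ) : ℝ) * α - ((r.num - q * m : ℤ) : ℝ)| :=
          distInt_le_int _ _
      _ = |Q * (β - K * α - m)| := by
          rw [hnk, ← abs_neg (Q * (β - K * α - ↑m))]
          push_cast
          congr 1
          rw [← hqβ]; ring
      _ = Q * |β - K * α - m| := by rw [abs_mul, abs_of_pos hQ0]
      _ ≤ Q * K ^ (-(τ + 2)) := by
          exact mul_le_mul_of_nonneg_left hd hQ0.le
  have hdio' := hdio (q * k N) (Nat.mul_pos hq0 (hkpos N))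
  rw [hnk] at hdio' key
  have hmain : γ * (Q * K) ^ (-τ) ≤ Q * K ^ (-(τ + 2)) := le_trans hdio' key
  -- expand rpow
  have hexp1 : (Q * K) ^ (-τ) = Q ^ (-τ) * K ^ (-τ) := Real.mul_rpow hQ0.le hK0.le
  have hexp2 : K ^ (-(τ + 2)) = K ^ (-τ) * K ^ (-(2:ℝ)) := by
    rw [← Real.rpow_add hK0]; ring_nf
  have hKτ : 0 < K ^ (-τ) := Real.rpow_pos_of_pos hK0 _
  have h2 : c ≤ Q * K ^ (-(2:ℝ)) := by
    rw [hexp1, hexp2] at hmain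
    have := (mul_le_mul_iff_of_pos_right hKτ).mp (by linarith [hmain] : (γ * Q ^ (-τ)) * K ^ (-τ) ≤ (Q * K ^ (-(2:ℝ))) * K ^ (-τ))
    linarith [this]
  have hK2 : K ^ (-(2:ℝ)) = (K ^ 2)⁻¹ := by
    rw [Real.rpow_neg hK0.le]
    norm_num [Real.rpow_natCast]
  -- c * K^2 ≤ Q
  have h3 : c * K ^ 2 ≤ Q := by
    rw [hK2] at h2
    have hK2pos : (0:ℝ) < K ^ 2 := by positivity
    calc c * K ^ 2 ≤ (Q * (K ^ 2)⁻¹) * K ^ 2 := mul_le_mul_of_nonneg_right h2 hK2pos.le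
      _ = Q := by field_simp
  have h4 : Q < c * K := by
    rw [div_lt_iff₀ hc0] at hKgt
    linarith [hKgt]
  nlinarith [h3, h4, hK1, hc0.le]
end
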